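/- Degree bound in q: deg_q A_n(q^K t) ≤ (K^2−K)/2 + (3n^2+n)/2 when 0 ≤ K ≤ n, and deg_q A_n(q^K t) ≤ n^2 + nK when K > n. -/

import Mathlib

open Finset

/-- q-Pochhammer symbol `(a)_n = ∏_{j=0}^{n-1} (1 - a q^j)`. -/
noncomputable def qPoch (q a : ℝ) (n : ℕ) : ℝ := ∏ j ∈ Finset.range n, (1 - a * q ^ j)

/-- q-exponential `E_q(t) = ∏_{k=0}^∞ (1 - q^k t)⁻¹`. -/
noncomputable def qExp (q t : ℝ) : ℝ := ∏' k : ℕ, (1 - q ^ k * t)⁻¹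

/-- q-binomial coefficient. -/
noncomputable def qBinom (q : ℝ) (n k : ℕ) : ℝ :=
  qPoch q q n / (qPoch q q k * qPoch q q (n - k))

/-- Padé numerator polynomial `A_n(t)`. -/
noncomputable def padeA (q : ℝ) (n : ℕ) (t : ℝ) : ℝ :=
  ∑ k ∈ Finset.range (n + 1),
    qBinom q n k * q ^ (k * n) * qPoch q (q ^ (n + 1)) (n - k) * t ^ k

/-- Padé denominator polynomial `B_n(t)`. -/
noncomputable def padeB (q : ℝ) (n : ℕ) (t : ℝ) : ℝ :=
  ∑ k ∈ Finset.range (n + 1),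
    qBinom q n k * q ^ (k * (k - 1) / 2) * qPoch q (q ^ (n + 1)) (n - k) * (-t) ^ k

/-- Padé remainder `S_n(t)`. -/
noncomputable def padeS (q : ℝ) (n : ℕ) (t : ℝ) : ℝ :=
  (-1) ^ n * t ^ (2 * n + 1) * q ^ ((3 * n ^ 2 + n) / 2) *
    (qPoch q q n / qPoch q q (2 * n + 1)) *
    ∑' k : ℕ, qPoch q (q ^ (n + 1)) k * t ^ k / (qPoch q q k * qPoch q (q ^ (2 * n + 2)) k)

/-- Evaluate `P ∈ ℤ[t][q]` (outer variable `q`, inner variable `t`) at real `q, t`. -/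
noncomputable def evalTQ (P : Polynomial (Polynomial ℤ)) (q t : ℝ) : ℝ :=
  Polynomial.eval q (P.map (Polynomial.eval₂RingHom (Int.castRingHom ℝ) t))

/-!
Substituting `t ↦ q^K t` turns the `k`-th term of `A_n` into `t^k` times the product of the
Gaussian binomial polynomial (degree `k(n-k)`), the monomial `q^{kn+Kk}` and the polynomial
`∏_{j<n-k} (1 - q^{n+1+j})` (degree `(n-k)(n+1) + (n-k)(n-k-1)/2`). The sum of these degrees is
at most the claimed bound for every `k ≤ n`, and `P` equals this explicit polynomial because two
elements of `ℤ[t][q]` that agree for all real `t` and all `q ∈ (0,1)` coincide.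
-/

open Polynomial

noncomputable def gaussBinomial : ℕ → ℕ → ℤ[X]
  | _, 0 => 1
  | 0, _ + 1 => 0
  | n + 1, k + 1 => gaussBinomial n k + X ^ (k + 1) * gaussBinomial n (k + 1)

namespace gaussBinomial

@[simp]
lemma zero_right (n : ℕ) : gaussBinomial n 0 = 1 := by cases n <;> rfl

lemma succ_succ (n k : ℕ) :
    gaussBinomial (n + 1) (k + 1) = gaussBinomial n k + X ^ (k + 1) * gaussBinomial n (k + 1) :=
  rfl

lemma eq_zero_of_lt : ∀ {n k : ℕ}, n < k → gaussBinomial n k = 0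
  | 0, _ + 1, _ => rfl
  | n + 1, k + 1, h => by
    rw [succ_succ, eq_zero_of_lt (by omega : n < k), eq_zero_of_lt (by omega : n < k + 1)]
    ring

lemma natDegree_le : ∀ n k : ℕ, (gaussBinomial n k).natDegree ≤ k * (n - k)
  | _, 0 => by simp
  | 0, _ + 1 => by simp [gaussBinomial]
  | n + 1, k + 1 => by
    rw [succ_succ]
    refine (natDegree_add_le _ _).trans (max_le ?_ ?_)
    · exact (natDegree_le n k).trans (Nat.mul_le_mul (by omega) (by omega))
    · rcases Nat.lt_or_ge n (k + 1) with hn | hn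
      · simp [eq_zero_of_lt hn]
      refine natDegree_mul_le.trans ?_
      rw [natDegree_X_pow, show n + 1 - (k + 1) = n - (k + 1) + 1 by omega, Nat.mul_succ]
      have := natDegree_le n (k + 1)
      omega

end gaussBinomial

section QPochhammer

variable {q : ℝ}

@[simp]
lemma qPoch_zero (a : ℝ) : qPoch q a 0 = 1 :=
  prod_range_zero _

lemma qPoch_succ (a : ℝ) (m : ℕ) : qPoch q a (m + 1) = qPoch q a m * (1 - a * q ^ m) :=
  prod_range_succ _ _

lemma qPoch_self_ne_zero (hq : |q| < 1) (m : ℕ) : qPoch q q m ≠ 0 := by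
  refine prod_ne_zero_iff.mpr fun j _ => sub_ne_zero.mpr ?_
  rw [← pow_succ']
  exact (abs_lt.mp ((abs_pow q _).symm ▸ pow_lt_one₀ (abs_nonneg q) hq j.succ_ne_zero)).2.ne'

lemma qBinom_zero_right (hq : |q| < 1) (n : ℕ) : qBinom q n 0 = 1 := by
  simp [qBinom, qPoch_self_ne_zero hq]

lemma qBinom_self (hq : |q| < 1) (n : ℕ) : qBinom q n n = 1 := by
  simp [qBinom, qPoch_self_ne_zero hq]

lemma qBinom_succ_succ (hq : |q| < 1) {n k : ℕ} (hk : k < n) :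
    qBinom q (n + 1) (k + 1) = qBinom q n k + q ^ (k + 1) * qBinom q n (k + 1) := by
  obtain ⟨d, rfl⟩ := Nat.exists_eq_add_of_lt hk
  have hpoch : ∀ m, qPoch q q m ≠ 0 := qPoch_self_ne_zero hq
  have hk1 := right_ne_zero_of_mul (qPoch_succ (q := q) q k ▸ hpoch (k + 1))
  have hd1 := right_ne_zero_of_mul (qPoch_succ (q := q) q d ▸ hpoch (d + 1))
  simp only [qBinom, show k + d + 1 + 1 - (k + 1) = d + 1 by omega,
    show k + d + 1 - k = d + 1 by omega, show k + d + 1 - (k + 1) = d by omega, qPoch_succ]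
  field_simp
  ring

end QPochhammer

lemma gaussBinomial.aeval_eq_qBinom {q : ℝ} (hq : |q| < 1) :
    ∀ {n k : ℕ}, k ≤ n → aeval q (gaussBinomial n k) = qBinom q n k
  | _, 0, _ => by simp [qBinom_zero_right hq]
  | n + 1, k + 1, hk => by
    rw [succ_succ, map_add, map_mul, map_pow, aeval_X, aeval_eq_qBinom hq (by omega : k ≤ n)]
    rcases Nat.lt_or_ge k n with hlt | hge
    · rw [aeval_eq_qBinom hq hlt, qBinom_succ_succ hq hlt]
    · obtain rfl : k = n := by omega
      rw [eq_zero_of_lt k.lt_succ_self, map_zero, mul_zero, add_zero, qBinom_self hq,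
        qBinom_self hq]

noncomputable def qPochPoly (s m : ℕ) : ℤ[X] :=
  ∏ j ∈ range m, (1 - X ^ (s + j))

lemma aeval_qPochPoly (q : ℝ) (s m : ℕ) : aeval q (qPochPoly s m) = qPoch q (q ^ s) m := by
  simp [qPochPoly, qPoch, pow_add]

lemma natDegree_qPochPoly_le (s m : ℕ) :
    (qPochPoly s m).natDegree ≤ m * s + m * (m - 1) / 2 := by
  calc (qPochPoly s m).natDegree ≤ ∑ j ∈ range m, (s + j) := by
        refine (natDegree_prod_le _ _).trans (sum_le_sum fun j _ => ?_)
        exact (natDegree_sub_le _ _).trans (by simp)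
    _ = m * s + m * (m - 1) / 2 := by
        rw [sum_add_distrib, sum_const, card_range, smul_eq_mul, sum_range_id]

noncomputable def evalTQHom (q t : ℝ) : ℤ[X][X] →+* ℝ :=
  (evalRingHom q).comp (mapRingHom (eval₂RingHom (Int.castRingHom ℝ) t))

lemma evalTQ_eq_evalTQHom (P : ℤ[X][X]) (q t : ℝ) : evalTQ P q t = evalTQHom q t P :=
  rfl

lemma evalTQHom_C (p : ℤ[X]) (q t : ℝ) : evalTQHom q t (C p) = aeval t p := by
  simp only [evalTQHom, RingHom.comp_apply, coe_mapRingHom, Polynomial.map_C, coe_evalRingHom,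
    eval_C, coe_eval₂RingHom, aeval_def, algebraMap_int_eq]

lemma evalTQHom_map_C (p : ℤ[X]) (q t : ℝ) : evalTQHom q t (p.map C) = aeval q p := by
  simp [evalTQHom, aeval_def, eval₂_eq_eval_map, Polynomial.map_map]

lemma eq_of_evalTQ_eq {S : Set ℝ} (hS : S.Infinite) {P Q : ℤ[X][X]}
    (h : ∀ q ∈ S, ∀ t, evalTQ P q t = evalTQ Q q t) : P = Q := by
  have hmap (t : ℝ) : P.map (eval₂RingHom (Int.castRingHom ℝ) t) =
      Q.map (eval₂RingHom (Int.castRingHom ℝ) t) :=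
    eq_of_infinite_eval_eq _ _ (hS.mono fun q hq => h q hq t)
  ext1 i
  refine map_injective (Int.castRingHom ℝ) Int.cast_injective (Polynomial.funext fun t => ?_)
  simpa [← eval₂_eq_eval_map] using congrArg (coeff · i) (hmap t)

/-- `A_n(q^K t)` in `ℤ[t][q]`: the inner variable `t` enters as `C X`. -/
noncomputable def padeAPoly (n K : ℕ) : ℤ[X][X] :=
  ∑ k ∈ range (n + 1),
    C (X ^ k) * (gaussBinomial n k * X ^ (k * n + K * k) * qPochPoly (n + 1) (n - k)).map C

lemma evalTQ_padeAPoly {q : ℝ} (hq : |q| < 1) (n K : ℕ) (t : ℝ) :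
    evalTQ (padeAPoly n K) q t = padeA q n (q ^ K * t) := by
  rw [evalTQ_eq_evalTQHom, padeAPoly, map_sum, padeA]
  refine sum_congr rfl fun k hk => ?_
  rw [map_mul, evalTQHom_C, evalTQHom_map_C, map_pow, aeval_X, map_mul, map_mul, map_pow, aeval_X,
    gaussBinomial.aeval_eq_qBinom hq (Nat.lt_succ_iff.mp (mem_range.mp hk)), aeval_qPochPoly]
  ring

lemma two_mul_mul_pred_div_two_add_self (m : ℕ) : 2 * (m * (m - 1) / 2) + m = m * m := by
  rw [Nat.two_mul_div_two_of_even (Nat.even_mul_pred_self m)]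
  cases m <;> simp [Nat.add_mul, Nat.mul_add]

/-- With `m = n - k`, the slack is `((K-k)² - (K-k))/2` when `K ≤ n` and
`m(2K - 2k - m - 1)/2` when `K > n`. -/
lemma padeA_exponent_le {n k : ℕ} (K : ℕ) (hk : k ≤ n) :
    k * (n - k) + (k * n + K * k) + ((n - k) * (n + 1) + (n - k) * (n - k - 1) / 2) ≤
      if K ≤ n then (K ^ 2 - K) / 2 + (3 * n ^ 2 + n) / 2 else n ^ 2 + n * K := by
  obtain ⟨m, rfl⟩ := Nat.exists_eq_add_of_le hk
  rw [Nat.add_sub_cancel_left]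
  have hm := two_mul_mul_pred_div_two_add_self m
  split_ifs with hKn
  · have hK := two_mul_mul_pred_div_two_add_self K
    have hn : 2 * ((3 * (k + m) ^ 2 + (k + m)) / 2) = 3 * (k + m) ^ 2 + (k + m) :=
      Nat.two_mul_div_two_of_even (by simp [parity_simps])
    rw [sq K, ← Nat.mul_sub_one]
    have hKk : 0 ≤ ((K : ℤ) - k) * ((K : ℤ) - k - 1) := by
      rcases le_or_gt (K : ℤ) k with h | h <;> nlinarith
    zify at *
    nlinarith
  · zify at *
    nlinarith

lemma natDegree_padeAPoly_le (n K : ℕ) :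
    (padeAPoly n K).natDegree ≤
      if K ≤ n then (K ^ 2 - K) / 2 + (3 * n ^ 2 + n) / 2 else n ^ 2 + n * K := by
  refine natDegree_sum_le_of_forall_le _ _ fun k hk => ?_
  refine (natDegree_C_mul_le _ _).trans <| natDegree_map_le.trans <| natDegree_mul_le.trans ?_
  refine le_trans ?_ (padeA_exponent_le K (Nat.lt_succ_iff.mp (mem_range.mp hk)))
  gcongr
  · exact natDegree_mul_le.trans <|
      add_le_add (gaussBinomial.natDegree_le n k) (natDegree_X_pow_le _)
  · exact natDegree_qPochPoly_le (n + 1) (n - k)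

/-- `deg_q A_n(q^K t) ≤ (K²-K)/2 + (3n²+n)/2` for `K ≤ n` and
`deg_q A_n(q^K t) ≤ n² + nK` for `K > n`. -/
theorem padeA_q_degree_bound (n K : ℕ) (P : Polynomial (Polynomial ℤ))
    (hP : ∀ q t : ℝ, 0 < |q| → |q| < 1 → evalTQ P q t = padeA q n (q ^ K * t)) :
    P.natDegree ≤ if K ≤ n then (K ^ 2 - K) / 2 + (3 * n ^ 2 + n) / 2
      else n ^ 2 + n * K := by
  obtain rfl : P = padeAPoly n K := by
    refine eq_of_evalTQ_eq (Set.Ioo_infinite (zero_lt_one' ℝ)) fun q ⟨hq0, hq1⟩ t => ?_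
    have hq : |q| < 1 := (abs_of_pos hq0).symm ▸ hq1
    rw [hP q t (abs_pos_of_pos hq0) hq, evalTQ_padeAPoly hq]
  exact natDegree_padeAPoly_le n K
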